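/- arXiv:1006.2562 — 6 statements merged into one kernel-verified Lean document; each statement's English description precedes it below -/
import Mathlib

section
/- There exists a unique sequence of polynomials f_0(X,Y), f_1(X,Y), ... in the noncommutative polynomial ring Z⟨X,Y⟩ such that in the formal power series ring Z⟨X,Y⟩[[T]] one has (1 - (X+Y)T) = (1 - XT)(1 - YT)·∏_{k=0}^∞ (1 - f_k(X,Y)·XY·T^{k+2}). -/
/-- The generator `X` of `ℤ⟨X,Y⟩`. -/
noncomputable def ncX : FreeAlgebra ℤ (Fin 2) := FreeAlgebra.ι ℤ 0

/-- The generator `Y` of `ℤ⟨X,Y⟩`. -/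
noncomputable def ncY : FreeAlgebra ℤ (Fin 2) := FreeAlgebra.ι ℤ 1

/-!
Write `Q = (1 - XT)(1 - YT) = 1 - (X+Y)T + XY T²` and `P_n` for the product of the first `n`
factors `1 - c_k T^{k+2}`. Multiplying `Q P_n` by `1 - c_n T^{n+2}` leaves the coefficients below
`T^{n+2}` alone and subtracts `c_n` from that of `T^{n+2}`, so the factorization holds iff
`c_n = [T^{n+2}](Q P_n)` for all `n`, a recursion with exactly one solution. Each `c_n` lies in
the left ideal `ℤ⟨X,Y⟩·XY`: if the earlier `c_k` do, so do all coefficients `p_j` (`j ≥ 1`)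
of `P_n`, hence so does `[T^{n+2}](Q P_n) = p_{n+2} - (X+Y) p_{n+1} + XY p_n`. As `XY` is right
regular, `c_n = f_n XY` determines `f_n`.
-/

open PowerSeries

namespace DeSmit

variable {R : Type*} [Ring R]

noncomputable def partialProd (c : ℕ → R) (n : ℕ) : R⟦X⟧ :=
  ((List.range n).map fun k => 1 - C (c k) * X ^ (k + 2)).prod

@[simp]
theorem partialProd_zero (c : ℕ → R) : partialProd c 0 = 1 := rfl

theorem partialProd_succ (c : ℕ → R) (n : ℕ) :
    partialProd c (n + 1) = partialProd c n * (1 - C (c n) * X ^ (n + 2)) := by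
  simp [partialProd, List.range_succ]

theorem partialProd_congr {c c' : ℕ → R} {n : ℕ} (h : ∀ k < n, c k = c' k) :
    partialProd c n = partialProd c' n :=
  congrArg List.prod <| List.map_congr_left fun k hk => by rw [h k (List.mem_range.mp hk)]

theorem coeff_mul_one_sub_C_mul_X_pow (B : R⟦X⟧) (a : R) (d i : ℕ) :
    coeff i (B * (1 - C a * X ^ d)) = coeff i B - if d ≤ i then coeff (i - d) B * a else 0 := by
  rw [mul_sub, mul_one, ← mul_assoc, map_sub, coeff_mul_X_pow', coeff_mul_C]

theorem coeff_mul_one_sub_C_mul_X_pow_of_le {B : R⟦X⟧} (hB : coeff 0 B = 1) (a : R)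
    {d i : ℕ} (hi : i ≤ d) :
    coeff i (B * (1 - C a * X ^ d)) = coeff i B - if i = d then a else 0 := by
  rw [coeff_mul_one_sub_C_mul_X_pow]
  rcases hi.lt_or_eq with hi | rfl
  · rw [if_neg hi.not_ge, if_neg hi.ne]
  · rw [if_pos le_rfl, if_pos rfl, Nat.sub_self, hB, one_mul]

theorem coeff_zero_partialProd (c : ℕ → R) (n : ℕ) : coeff 0 (partialProd c n) = 1 := by
  induction n with
  | zero => simp
  | succ n ih =>
    rw [partialProd_succ, coeff_mul_one_sub_C_mul_X_pow, if_neg (by omega), ih, sub_zero]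

theorem coeff_partialProd_mem {I : Ideal R} {c : ℕ → R} {n : ℕ} (hc : ∀ k < n, c k ∈ I)
    {i : ℕ} (hi : i ≠ 0) : coeff i (partialProd c n) ∈ I := by
  induction n with
  | zero => simp [coeff_one, hi]
  | succ n ih =>
    rw [partialProd_succ, coeff_mul_one_sub_C_mul_X_pow]
    refine I.sub_mem (ih fun k hk => hc k (by omega)) ?_
    split_ifs
    · exact I.mul_mem_left _ (hc n n.lt_succ_self)
    · exact I.zero_mem

theorem factorization_iff_rec {L Q : R⟦X⟧} (hQ : coeff 0 Q = 1)
    (hLQ : ∀ i ≤ 1, coeff i L = coeff i Q) (hL : ∀ i ≥ 2, coeff i L = 0) (c : ℕ → R) :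
    (∀ m i, i ≤ m + 2 → coeff i L = coeff i (Q * partialProd c (m + 1))) ↔
      ∀ n, c n = coeff (n + 2) (Q * partialProd c n) := by
  have hQP (n : ℕ) : coeff 0 (Q * partialProd c n) = 1 := by
    rw [coeff_zero_eq_constantCoeff_apply, map_mul, ← coeff_zero_eq_constantCoeff_apply,
      ← coeff_zero_eq_constantCoeff_apply, hQ, coeff_zero_partialProd, one_mul]
  have hstep (n i : ℕ) (hi : i ≤ n + 2) : coeff i (Q * partialProd c (n + 1)) =
      coeff i (Q * partialProd c n) - if i = n + 2 then c n else 0 := by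
    rw [partialProd_succ, ← mul_assoc, coeff_mul_one_sub_C_mul_X_pow_of_le (hQP n) _ hi]
  constructor
  · intro h n
    have := h n (n + 2) le_rfl
    rw [hL _ le_add_self, hstep n _ le_rfl, if_pos rfl] at this
    exact (sub_eq_zero.mp this.symm).symm
  · intro h
    suffices ∀ n i, i ≤ n + 1 → coeff i L = coeff i (Q * partialProd c n) from
      fun m i hi => this (m + 1) i hi
    intro n
    induction n with
    | zero => simpa using hLQ
    | succ n ih =>
      intro i hi
      rw [hstep n i (by omega)]
      rcases Nat.le_succ_iff.mp hi with hi | rfl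
      · rw [if_neg (by omega), sub_zero, ih i hi]
      · rw [if_pos rfl, ← h n, sub_self, hL _ le_add_self]

noncomputable def greedyProd (Q : R⟦X⟧) : ℕ → R⟦X⟧
  | 0 => 1
  | n + 1 => greedyProd Q n * (1 - C (coeff (n + 2) (Q * greedyProd Q n)) * X ^ (n + 2))

noncomputable def greedyCoeff (Q : R⟦X⟧) (n : ℕ) : R :=
  coeff (n + 2) (Q * greedyProd Q n)

theorem greedyProd_eq_partialProd (Q : R⟦X⟧) (n : ℕ) :
    greedyProd Q n = partialProd (greedyCoeff Q) n := by
  induction n with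
  | zero => rfl
  | succ n ih => rw [greedyProd, partialProd_succ, ← ih, greedyCoeff]

theorem greedyCoeff_eq (Q : R⟦X⟧) (n : ℕ) :
    greedyCoeff Q n = coeff (n + 2) (Q * partialProd (greedyCoeff Q) n) := by
  rw [greedyCoeff, greedyProd_eq_partialProd]

theorem eq_greedyCoeff {Q : R⟦X⟧} {c : ℕ → R}
    (hc : ∀ n, c n = coeff (n + 2) (Q * partialProd c n)) : c = greedyCoeff Q := by
  funext n
  induction n using Nat.strong_induction_on with
  | _ n ih => rw [hc, greedyCoeff_eq, partialProd_congr ih]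

theorem eq_greedyCoeff_iff {Q : R⟦X⟧} {c : ℕ → R} :
    (∀ n, c n = coeff (n + 2) (Q * partialProd c n)) ↔ c = greedyCoeff Q :=
  ⟨eq_greedyCoeff, by rintro rfl; exact greedyCoeff_eq Q⟩

theorem one_sub_C_mul_X_mul_one_sub_C_mul_X (x y : R) :
    (1 - C x * X) * (1 - C y * X) = 1 - C (x + y) * X + C (x * y) * X ^ 2 := by
  have : X * C y = C y * (X : R⟦X⟧) := (commute_X _).symm.eq
  simp only [mul_sub, sub_mul, one_mul, mul_one, map_add, map_mul, add_mul]
  rw [mul_assoc (C x), ← mul_assoc X, this]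
  noncomm_ring

theorem coeff_add_two_quadratic_mul (x y : R) (B : R⟦X⟧) (n : ℕ) :
    coeff (n + 2) ((1 - C x * X) * (1 - C y * X) * B) =
      coeff (n + 2) B - (x + y) * coeff (n + 1) B + x * y * coeff n B := by
  rw [one_sub_C_mul_X_mul_one_sub_C_mul_X]
  simp [add_mul, sub_mul, mul_assoc, coeff_X_pow_mul']

/-- `Ideal R` consists of left ideals, so this says that `x * y` divides on the right. -/
theorem greedyCoeff_mem_span (x y : R) (n : ℕ) :
    greedyCoeff ((1 - C x * X) * (1 - C y * X)) n ∈ Ideal.span {x * y} := by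
  set I := Ideal.span {x * y}
  induction n using Nat.strong_induction_on with
  | _ n ih =>
    have hP {i : ℕ} (hi : i ≠ 0) := coeff_partialProd_mem (I := I) ih hi
    rw [greedyCoeff_eq, coeff_add_two_quadratic_mul]
    refine I.add_mem (I.sub_mem (hP (by omega)) (I.mul_mem_left _ (hP (by omega)))) ?_
    rcases n with _ | n
    · rw [coeff_zero_partialProd, mul_one]
      exact Ideal.subset_span rfl
    · exact I.mul_mem_left _ (hP (by omega))

theorem existsUnique_factorization (x y : R) (hxy : IsRightRegular (x * y)) :
    ∃! f : ℕ → R, ∀ m i, i ≤ m + 2 →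
      coeff i (1 - C (x + y) * X) =
        coeff i ((1 - C x * X) * (1 - C y * X) * partialProd (fun k => f k * x * y) (m + 1)) := by
  set Q := (1 - C x * X) * (1 - C y * X)
  have hQ : coeff 0 Q = 1 := by simp [Q]
  have hLQ (i : ℕ) (hi : i ≤ 1) : coeff i (1 - C (x + y) * X) = coeff i Q := by
    rw [show Q = _ from one_sub_C_mul_X_mul_one_sub_C_mul_X x y, map_add (coeff i),
      coeff_C_mul_X_pow, if_neg (by omega), add_zero]
  have hL (i : ℕ) (hi : i ≥ 2) : coeff i (1 - C (x + y) * X : R⟦X⟧) = 0 := by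
    rw [map_sub, coeff_one, coeff_C_mul, coeff_X, if_neg (by omega), if_neg (by omega), mul_zero,
      sub_zero]
  simp only [fun f : ℕ → R =>
    (factorization_iff_rec hQ hLQ hL (fun k => f k * x * y)).trans eq_greedyCoeff_iff]
  choose f hf using fun n => Ideal.mem_span_singleton'.mp (greedyCoeff_mem_span x y n)
  have hf' : (fun k => f k * x * y) = greedyCoeff Q := funext fun n => (mul_assoc ..).trans (hf n)
  refine ⟨f, hf', fun g hg => funext fun n => hxy ?_⟩
  simpa only [mul_assoc] using congrFun (hg.trans hf'.symm) n

end DeSmit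

theorem ncX_mul_ncY_ne_zero : ncX * ncY ≠ 0 :=
  mul_ne_zero (FreeAlgebra.ι_ne_zero _) (FreeAlgebra.ι_ne_zero _)

/-- de Smit's lemma. There is a unique sequence `f₀, f₁, …` of
noncommutative polynomials in `ℤ⟨X,Y⟩` with
`1 - (X+Y)T = (1-XT)(1-YT)·∏_{k=0}^∞ (1 - f_k(X,Y)·XY·T^{k+2})` in `ℤ⟨X,Y⟩[[T]]`;
the `T`-adic convergence of the infinite product (whose `k`-th factor is `≡ 1 mod T^{k+2}`)
is expressed by saying that every coefficient of the left side agrees with the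
corresponding coefficient of every sufficiently long finite partial product. -/
theorem deSmit_factorization :
    ∃! f : ℕ → FreeAlgebra ℤ (Fin 2),
      ∀ m i : ℕ, i ≤ m + 2 →
        PowerSeries.coeff i
            (1 - PowerSeries.C (ncX + ncY) * PowerSeries.X) =
        PowerSeries.coeff i
            ((1 - PowerSeries.C ncX * PowerSeries.X) *
              (1 - PowerSeries.C ncY * PowerSeries.X) *
              (((List.range (m + 1)).map
                (fun k => 1 - PowerSeries.C (f k * ncX * ncY) *
                  PowerSeries.X ^ (k + 2))).prod)) :=
  DeSmit.existsUnique_factorization ncX ncY (IsRegular.of_ne_zero ncX_mul_ncY_ne_zero).right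
end

section
/- Let A be a commutative ring free of rank n ≥ 2 as a module over a commutative ring B. Then for all x, y ∈ A: s_2(x+y) = s_2(x) + s_1(x)s_1(y) + s_2(y) - s_1(xy), where s_1 denotes the trace of multiplication and s_2 the second coefficient of the characteristic polynomial of multiplication. -/
/-!
Up to sign, `s₂` of a matrix is the sum of its principal `2 × 2` minors. For `2 × 2` matrices
`det (M + N) = det M + det N + tr M tr N - tr (M N)`, and the cross terms
`Mᵢᵢ Nⱼⱼ - Mᵢⱼ Nⱼᵢ` of all principal `2 × 2` minors add up to `tr M tr N - tr (M N)`,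
because the diagonal terms `i = j` cancel. Apply this to the matrices of multiplication by `x`
and `y`, whose sum and product are those of `x + y` and `x y`.
-/

open scoped TensorProduct
open PiTensorProduct

/-- The coefficients `s_j(a)` of the characteristic polynomial of multiplication by `a`,
so that `P_a(T) = T^n - s_1(a)T^{n-1} + s_2(a)T^{n-2} - ⋯ + (-1)^n s_n(a)`. -/
noncomputable def sCoeff {B A : Type*} [CommRing B] [CommRing A] [Algebra B A] {n : ℕ}
    (b : Module.Basis (Fin n) B A) (a : A) (j : ℕ) : B :=
  (-1) ^ j * (Matrix.charpoly (Algebra.leftMulMatrix b a)).coeff (n - j)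

/-- The ideal `I(A,B) ⊆ A^{⊗n}` generated by
`s_j(a) - Σ_{i₁<⋯<i_j} a^{(i₁)}⋯a^{(i_j)}` for `a ∈ A`, `1 ≤ j ≤ n`. -/
noncomputable def snIdeal {B A : Type*} [CommRing B] [CommRing A] [Algebra B A] {n : ℕ}
    (b : Module.Basis (Fin n) B A) : Ideal (⨂[B] _ : Fin n, A) :=
  Ideal.span { z | ∃ (a : A) (j : Fin n), z =
    (algebraMap B (⨂[B] _ : Fin n, A)) (sCoeff b a ((j : ℕ) + 1)) -
      ∑ s ∈ Finset.powersetCard ((j : ℕ) + 1) (Finset.univ : Finset (Fin n)),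
        tprod B (fun i => if i ∈ s then a else 1) }

/-- The Sₙ-closure `G(A/B) = A^{⊗n}/I(A,B)`. -/
noncomputable abbrev SnClosure {B A : Type*} [CommRing B] [CommRing A] [Algebra B A] {n : ℕ}
    (b : Module.Basis (Fin n) B A) : Type _ :=
  (⨂[B] _ : Fin n, A) ⧸ snIdeal b

/-- `a^{(i)}`: the image in `G(A/B)` of `1 ⊗ ⋯ ⊗ a ⊗ ⋯ ⊗ 1` with `a` in position `i`. -/
noncomputable def tf {B A : Type*} [CommRing B] [CommRing A] [Algebra B A] {n : ℕ}
    (b : Module.Basis (Fin n) B A) (a : A) (i : Fin n) : SnClosure b :=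
  (Ideal.Quotient.mk (snIdeal b)) (tprod B (fun p => if p = i then a else 1))

open Finset

theorem Finset.sum_sum_eq_sum_offDiag {ι M : Type*} [DecidableEq ι] [AddCommMonoid M]
    (s : Finset ι) (f : ι → ι → M) (hf : ∀ i, f i i = 0) :
    ∑ i ∈ s, ∑ j ∈ s, f i j = ∑ p ∈ s.offDiag, f p.1 p.2 := by
  rw [← sum_product', ← sum_filter_add_sum_filter_not (s ×ˢ s) (fun p => p.1 = p.2),
    sum_eq_zero (by simp +contextual [hf]), zero_add]
  congr 1
  ext p
  simp [and_assoc]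

/-- Each off-diagonal pair `(i, j)` lies in exactly one two-element set, namely `{i, j}`. -/
theorem Finset.sum_powersetCard_two_sum_sum {ι M : Type*} [Fintype ι] [DecidableEq ι]
    [AddCommMonoid M] (f : ι → ι → M) (hf : ∀ i, f i i = 0) :
    ∑ s ∈ univ.powersetCard 2, ∑ i ∈ s, ∑ j ∈ s, f i j = ∑ i, ∑ j, f i j := by
  have hpair : ∀ p ∈ (univ : Finset ι).offDiag, {p.1, p.2} ∈ univ.powersetCard 2 := by
    intro p hp
    simpa using card_pair (mem_offDiag.mp hp).2.2
  have hfiber : ∀ s ∈ univ.powersetCard 2,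
      {p ∈ (univ : Finset ι).offDiag | {p.1, p.2} = s} = s.offDiag := by
    intro s hs
    ext p
    simp only [mem_filter, mem_offDiag, mem_univ, true_and]
    constructor
    · rintro ⟨hne, rfl⟩
      simp [hne]
    · rintro ⟨h1, h2, hne⟩
      refine ⟨hne, eq_of_subset_of_card_le (by simp [insert_subset_iff, h1, h2]) ?_⟩
      rw [card_pair hne, (mem_powersetCard.mp hs).2]
  simp_rw [sum_sum_eq_sum_offDiag _ f hf]
  rw [← sum_fiberwise_of_maps_to hpair]
  exact sum_congr rfl fun s hs => by rw [hfiber s hs]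

namespace Matrix

variable {R ι : Type*} [CommRing R] [Fintype ι]

theorem trace_mul_trace_sub_trace_mul (M N : Matrix ι ι R) :
    M.trace * N.trace - (M * N).trace = ∑ i, ∑ j, (M i i * N j j - M i j * N j i) := by
  simp only [trace, diag, mul_apply, sum_mul_sum, sum_sub_distrib]

variable [DecidableEq ι]

theorem det_add_of_card_eq_two (hι : Fintype.card ι = 2) (M N : Matrix ι ι R) :
    (M + N).det = M.det + N.det + (M.trace * N.trace - (M * N).trace) := by
  have hfin_two : ∀ P Q : Matrix (Fin 2) (Fin 2) R,
      (P + Q).det = P.det + Q.det + (P.trace * Q.trace - (P * Q).trace) := by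
    intro P Q
    simp only [det_fin_two, trace_fin_two, add_apply, mul_apply, Fin.sum_univ_two]
    ring
  set e := reindexAlgEquiv R R (Fintype.equivFinOfCardEq hι)
  have htrace : ∀ P : Matrix ι ι R, (e P).trace = P.trace := fun P =>
    (Fintype.equivFinOfCardEq hι).symm.sum_comp fun i => P i i
  have := hfin_two (e M) (e N)
  rwa [← map_add, ← map_mul, htrace, htrace, htrace, det_reindexAlgEquiv, det_reindexAlgEquiv,
    det_reindexAlgEquiv] at this

theorem charpoly_coeff_card_sub_two_add (h : 2 ≤ Fintype.card ι) (M N : Matrix ι ι R) :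
    (M + N).charpoly.coeff (Fintype.card ι - 2) =
      M.charpoly.coeff (Fintype.card ι - 2) + N.charpoly.coeff (Fintype.card ι - 2) +
        M.trace * N.trace - (M * N).trace := by
  have hminor : ∀ s ∈ univ.powersetCard 2, ((M + N).submatrix ((↑) : s → ι) (↑)).det =
      (M.submatrix ((↑) : s → ι) (↑)).det + (N.submatrix ((↑) : s → ι) (↑)).det +
        ∑ i ∈ s, ∑ j ∈ s, (M i i * N j j - M i j * N j i) := by
    intro s hs
    have hcard : Fintype.card s = 2 := by rw [Fintype.card_coe, (mem_powersetCard.mp hs).2]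
    rw [submatrix_add, Pi.add_apply, Pi.add_apply, det_add_of_card_eq_two hcard,
      trace_mul_trace_sub_trace_mul]
    simp only [submatrix_apply]
    rw [← sum_coe_sort s]
    simp_rw [← sum_coe_sort s]
  simp only [charpoly_coeff_eq_sum_minors _ _ h, sum_congr rfl hminor, sum_add_distrib,
    sum_powersetCard_two_sum_sum (fun i j => M i i * N j j - M i j * N j i)
      (fun i => sub_self _), ← trace_mul_trace_sub_trace_mul]
  ring

end Matrix

section

variable {B A : Type*} [CommRing B] [CommRing A] [Algebra B A] {n : ℕ}

theorem sCoeff_one (hn : 0 < n) (b : Module.Basis (Fin n) B A) (a : A) :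
    sCoeff b a 1 = (Algebra.leftMulMatrix b a).trace := by
  have : Nonempty (Fin n) := ⟨⟨0, hn⟩⟩
  rw [sCoeff, Matrix.trace_eq_neg_charpoly_coeff, Fintype.card_fin, pow_one, neg_one_mul]

theorem sCoeff_two (b : Module.Basis (Fin n) B A) (a : A) :
    sCoeff b a 2 = (Algebra.leftMulMatrix b a).charpoly.coeff (n - 2) := by
  rw [sCoeff, neg_one_sq, one_mul]

end

/-- For `A` free of rank `n ≥ 2` over `B`,
`s₂(x+y) = s₂(x) + s₁(x)s₁(y) + s₂(y) - s₁(xy)`. -/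
theorem s_two_add {B A : Type*} [CommRing B] [CommRing A] [Algebra B A] {n : ℕ}
    (hn : 2 ≤ n) (b : Module.Basis (Fin n) B A) (x y : A) :
    sCoeff b (x + y) 2 =
      sCoeff b x 2 + sCoeff b x 1 * sCoeff b y 1 + sCoeff b y 2 - sCoeff b (x * y) 1 := by
  have hmat := Matrix.charpoly_coeff_card_sub_two_add (by simpa using hn)
    (Algebra.leftMulMatrix b x) (Algebra.leftMulMatrix b y)
  rw [Fintype.card_fin, ← map_add, ← map_mul] at hmat
  rw [sCoeff_two, sCoeff_two, sCoeff_two, sCoeff_one (by omega), sCoeff_one (by omega),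
    sCoeff_one (by omega), hmat]
  ring
end

section
/- With B a commutative ring and A = B^n, the map sending a permutation σ ∈ S_n to the idempotent e_σ := e_{σ(1)}^{(1)} ⋯ e_{σ(n)}^{(n)} in G(B^n/B) induces an isomorphism of B[S_n]-modules B[S_n] ≅ G(B^n/B), where g ∈ S_n acts on G(B^n/B) by permuting tensor factors and satisfies g·e_σ = e_{gσ}. -/
open scoped TensorProduct
open PiTensorProduct

/-- The idempotent `e_σ ∈ G(Bⁿ/B)` whose tensor factor in position `j` is `e_{σ⁻¹(j)}`,
i.e. `e_i` sits in position `σ(i)`. -/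
noncomputable def eIdem (B : Type*) [CommRing B] {n : ℕ} (σ : Equiv.Perm (Fin n)) :
    SnClosure (Pi.basisFun B (Fin n)) :=
  (Ideal.Quotient.mk (snIdeal (Pi.basisFun B (Fin n))))
    (tprod B (fun j => Pi.single (σ⁻¹ j) (1 : B)))

/-!
`(Bⁿ)^{⊗n}` is the ring of `B`-valued functions on maps `f : Fin n → Fin n`, with the pure tensors
`e_{f(1)} ⊗ ⋯ ⊗ e_{f(n)}` as its orthogonal idempotents, and evaluation at `f` is a ring
homomorphism to `B`. At a bijection `f` every generator of `I(Bⁿ, B)` evaluates to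
`e_j(a) - e_j(a ∘ f) = 0`; at a non-injective `f` with a fibre `D = f⁻¹(k)` of size `m ≥ 2`, the
generator for `a = e_k` in degree `m` evaluates to `s_m(e_k) - e_m(1_D) = -1`, so the idempotent of
`f` lies in the ideal. Hence `G(Bⁿ/B)` is free on the idempotents of the bijections, i.e. on the
`e_σ`.
-/

lemma sum_powersetCard_prod_boole {R ι : Type*} [CommSemiring R] [Fintype ι] [DecidableEq ι]
    (D : Finset ι) (m : ℕ) :
    ∑ t ∈ Finset.powersetCard m Finset.univ, ∏ i ∈ t, (if i ∈ D then 1 else 0 : R)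
      = (D.card.choose m : R) := by
  have hfilter :
      (Finset.powersetCard m Finset.univ).filter (· ⊆ D) = Finset.powersetCard m D := by
    ext t
    simp [Finset.mem_powersetCard, and_comm]
  simp only [Finset.prod_boole, ← Finset.subset_iff, Finset.sum_boole, hfilter,
    Finset.card_powersetCard]

section TensorPowerOfPi

variable {B : Type*} [CommRing B] {ι κ : Type*} [Fintype ι]

variable (B) in
noncomputable def evalTensor (f : ι → κ) : (⨂[B] _ : ι, (κ → B)) →ₐ[B] B :=
  liftAlgHom ((MultilinearMap.mkPiAlgebra B ι B).compLinearMap fun i => LinearMap.proj (f i))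
    (by simp) (fun x y => by simpa using Finset.prod_mul_distrib)

@[simp] lemma evalTensor_tprod (f : ι → κ) (v : ι → κ → B) :
    evalTensor B f (⨂ₜ[B] i, v i) = ∏ i, v i (f i) := by
  rw [evalTensor, liftAlgHom_apply, lift.tprod]
  simp

variable [Fintype κ] [DecidableEq κ]

variable (B ι κ) in
noncomputable abbrev tensorBasisFun : Module.Basis (ι → κ) B (⨂[B] _ : ι, (κ → B)) :=
  Basis.piTensorProduct fun _ => Pi.basisFun B κ

lemma tensorBasisFun_apply (f : ι → κ) :
    tensorBasisFun B ι κ f = ⨂ₜ[B] i, Pi.single (f i) 1 := by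
  simp

lemma evalTensor_tensorBasisFun (f g : ι → κ) :
    evalTensor B f (tensorBasisFun B ι κ g) = if g = f then 1 else 0 := by
  simp [Pi.single_apply, Finset.prod_boole, funext_iff, eq_comm]

lemma tensorBasisFun_mul_tprod (f : ι → κ) (v : ι → κ → B) :
    tensorBasisFun B ι κ f * (⨂ₜ[B] i, v i) = (∏ i, v i (f i)) • tensorBasisFun B ι κ f := by
  have hsingle (i : ι) : Pi.single (f i) (1 : B) * v i = v i (f i) • Pi.single (f i) 1 := by
    rw [← Pi.single_mul_left, ← Pi.single_smul', one_mul, smul_eq_mul, mul_one]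
  rw [tensorBasisFun_apply, tprod_mul_tprod, ← MultilinearMap.map_smul_univ]
  simp only [Pi.mul_def, hsingle]

lemma tensorBasisFun_mul (f : ι → κ) (x : ⨂[B] _ : ι, (κ → B)) :
    tensorBasisFun B ι κ f * x = evalTensor B f x • tensorBasisFun B ι κ f := by
  induction x using PiTensorProduct.induction_on with
  | smul_tprod r v =>
    -- term mode: the module and algebra actions of `B` on `⨂` agree only up to unfolding
    calc tensorBasisFun B ι κ f * r • tprod B v = r • (tensorBasisFun B ι κ f * tprod B v) :=
          Algebra.mul_smul_comm r _ _
      _ = evalTensor B f (r • tprod B v) • tensorBasisFun B ι κ f := by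
          rw [tensorBasisFun_mul_tprod, map_smul, evalTensor_tprod, smul_assoc]
  | add x y hx hy => rw [mul_add, hx, hy, map_add, add_smul]

end TensorPowerOfPi

section Generators

variable {B A : Type*} [CommRing B] [CommRing A] [Algebra B A] {n : ℕ}

noncomputable def snGenerator (b : Module.Basis (Fin n) B A) (a : A) (m : ℕ) :
    ⨂[B] _ : Fin n, A :=
  algebraMap B _ (sCoeff b a m) -
    ∑ s ∈ Finset.powersetCard m Finset.univ, ⨂ₜ[B] i, if i ∈ s then a else 1

lemma snGenerator_mem_snIdeal (b : Module.Basis (Fin n) B A) (a : A) {m : ℕ} (h1 : 1 ≤ m)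
    (hm : m ≤ n) : snGenerator b a m ∈ snIdeal b := by
  obtain ⟨j, rfl⟩ := Nat.exists_eq_add_of_le' h1
  exact Ideal.subset_span ⟨a, ⟨j, hm⟩, rfl⟩

lemma snIdeal_le_of_snGenerator_mem (b : Module.Basis (Fin n) B A)
    {J : Ideal (⨂[B] _ : Fin n, A)} (hJ : ∀ a (j : Fin n), snGenerator b a (j + 1) ∈ J) :
    snIdeal b ≤ J :=
  Ideal.span_le.mpr <| by rintro z ⟨a, j, rfl⟩; exact hJ a j

end Generators

namespace SnClosurePi

variable {B : Type*} [CommRing B] {n : ℕ}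

lemma sCoeff_basisFun (a : Fin n → B) {m : ℕ} (hm : m ≤ n) :
    sCoeff (Pi.basisFun B (Fin n)) a m
      = ∑ t ∈ Finset.powersetCard m Finset.univ, ∏ i ∈ t, a i := by
  have hdiag : Algebra.leftMulMatrix (Pi.basisFun B (Fin n)) a = Matrix.diagonal a := by
    ext i j
    rw [Algebra.leftMulMatrix_eq_repr_mul, Pi.basisFun_apply, Pi.basisFun_repr,
      Matrix.diagonal_apply]
    simp [Pi.single_apply]
  have hcard : Multiset.card (Finset.univ.val.map a) = n := by simp
  rw [sCoeff, hdiag, Matrix.charpoly_diagonal, Finset.prod_eq_multiset_prod,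
    ← Function.comp_def (fun t => Polynomial.X - Polynomial.C t) a, ← Multiset.map_map,
    Multiset.prod_X_sub_C_coeff _ (by omega), hcard, Nat.sub_sub_self hm,
    Finset.esymm_map_val, ← mul_assoc, ← pow_add, Even.neg_one_pow ⟨m, rfl⟩, one_mul]

lemma evalTensor_snGenerator (f : Fin n → Fin n) (a : Fin n → B) {m : ℕ} (hm : m ≤ n) :
    evalTensor B f (snGenerator (Pi.basisFun B (Fin n)) a m)
      = ∑ t ∈ Finset.powersetCard m Finset.univ, ∏ i ∈ t, a i
        - ∑ t ∈ Finset.powersetCard m Finset.univ, ∏ i ∈ t, a (f i) := by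
  simp [snGenerator, sCoeff_basisFun a hm, ite_apply, Finset.prod_ite_mem]

lemma snIdeal_le_ker_evalTensor (σ : Equiv.Perm (Fin n)) :
    snIdeal (Pi.basisFun B (Fin n)) ≤ RingHom.ker (evalTensor B σ) := by
  refine snIdeal_le_of_snGenerator_mem _ fun a j => ?_
  have hperm : Finset.univ.val.map (fun i => a (σ i)) = Finset.univ.val.map a :=
    calc _ = (Finset.univ.val.map σ).map a := (Multiset.map_map a σ _).symm
      _ = _ := by rw [Multiset.map_univ_val_equiv]
  rw [RingHom.mem_ker, evalTensor_snGenerator _ _ j.isLt]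
  simp only [← Finset.esymm_map_val, hperm, sub_self]

lemma tensorBasisFun_mem_snIdeal {f : Fin n → Fin n} (hf : ¬ Function.Injective f) :
    tensorBasisFun B (Fin n) (Fin n) f ∈ snIdeal (Pi.basisFun B (Fin n)) := by
  obtain ⟨i, i', hii', hne⟩ := Function.not_injective_iff.mp hf
  set D := Finset.univ.filter (f · = f i)
  have h2m : 2 ≤ D.card := by
    rw [← Finset.card_pair hne]
    exact Finset.card_le_card (by simp [Finset.insert_subset_iff, D, hii'])
  have hmn : D.card ≤ n := by simpa using Finset.card_le_univ D
  set z := snGenerator (Pi.basisFun B (Fin n)) (Pi.single (f i) 1) D.card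
  have hz : evalTensor B f z = -1 := by
    have hk (x : Fin n) :
        (Pi.single (f i) 1 : Fin n → B) x = if x ∈ ({f i} : Finset (Fin n)) then 1 else 0 := by
      simp [Pi.single_apply]
    have hD (x : Fin n) : (Pi.single (f i) 1 : Fin n → B) (f x) = if x ∈ D then 1 else 0 := by
      simp [Pi.single_apply, D]
    rw [evalTensor_snGenerator _ _ hmn]
    simp only [hD]
    simp only [hk, sum_powersetCard_prod_boole, Finset.card_singleton,
      Nat.choose_eq_zero_of_lt (by omega : 1 < D.card)]
    simp
  have hmul : tensorBasisFun B (Fin n) (Fin n) f * z = -tensorBasisFun B (Fin n) (Fin n) f := by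
    rw [tensorBasisFun_mul, hz]
    exact neg_one_smul B (tensorBasisFun B (Fin n) (Fin n) f)
  rw [← neg_neg (tensorBasisFun B (Fin n) (Fin n) f), ← hmul]
  exact neg_mem (Ideal.mul_mem_left _ _ (snGenerator_mem_snIdeal _ _ (by omega) hmn))

lemma eIdem_eq_mk_tensorBasisFun (σ : Equiv.Perm (Fin n)) :
    eIdem B σ = Ideal.Quotient.mk _ (tensorBasisFun B (Fin n) (Fin n) ⇑σ⁻¹) := by
  rw [eIdem, tensorBasisFun_apply]

variable (B n) in
noncomputable def permCoeff : SnClosure (Pi.basisFun B (Fin n)) →ₗ[B] Equiv.Perm (Fin n) → B :=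
  LinearMap.pi fun σ => (Ideal.Quotient.liftₐ _ (evalTensor B ⇑σ⁻¹)
    fun _ hx => RingHom.mem_ker.mp (snIdeal_le_ker_evalTensor σ⁻¹ hx)).toLinearMap

lemma permCoeff_eIdem (τ : Equiv.Perm (Fin n)) : permCoeff B n (eIdem B τ) = Pi.single τ 1 := by
  ext σ
  rw [eIdem_eq_mk_tensorBasisFun]
  change evalTensor B ⇑σ⁻¹ (tensorBasisFun B (Fin n) (Fin n) ⇑τ⁻¹) = _
  rw [evalTensor_tensorBasisFun, Pi.single_apply]
  simp only [DFunLike.coe_fn_eq, inv_inj, eq_comm]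

lemma linearIndependent_eIdem : LinearIndependent B (eIdem B (n := n)) :=
  LinearIndependent.of_comp (permCoeff B n) <| by
    convert (Pi.basisFun B (Equiv.Perm (Fin n))).linearIndependent
    funext σ
    rw [Function.comp_apply, permCoeff_eIdem, Pi.basisFun_apply]

lemma mk_tensorBasisFun_mem_span_eIdem (f : Fin n → Fin n) :
    Ideal.Quotient.mk _ (tensorBasisFun B (Fin n) (Fin n) f)
      ∈ Submodule.span B (Set.range (eIdem B (n := n))) := by
  by_cases hf : Function.Injective f
  · let σ := Equiv.ofBijective f (Finite.injective_iff_bijective.mp hf)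
    refine Submodule.subset_span ⟨σ⁻¹, ?_⟩
    rw [eIdem_eq_mk_tensorBasisFun, inv_inv]
    rfl
  · rw [Ideal.Quotient.eq_zero_iff_mem.mpr (tensorBasisFun_mem_snIdeal hf)]
    exact zero_mem _

lemma span_eIdem : ⊤ ≤ Submodule.span B (Set.range (eIdem B (n := n))) := by
  rintro y -
  obtain ⟨x, rfl⟩ := Ideal.Quotient.mk_surjective y
  have hspan : Submodule.span B (Set.range (tensorBasisFun B (Fin n) (Fin n))) ≤
      (Submodule.span B (Set.range (eIdem B))).comap
        (Ideal.Quotient.mkₐ B (snIdeal (Pi.basisFun B (Fin n)))).toLinearMap :=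
    Submodule.span_le.mpr (Set.range_subset_iff.mpr mk_tensorBasisFun_mem_span_eIdem)
  exact hspan ((tensorBasisFun B (Fin n) (Fin n)).mem_span x)

variable (B n) in
noncomputable def eIdemBasis :
    Module.Basis (Equiv.Perm (Fin n)) B (SnClosure (Pi.basisFun B (Fin n))) :=
  .mk linearIndependent_eIdem span_eIdem

end SnClosurePi

open SnClosurePi in
/-- `σ ↦ e_σ` induces a `B[Sₙ]`-module isomorphism
`B[Sₙ] ≅ G(Bⁿ/B)`, where `g ∈ Sₙ` acts on `G(Bⁿ/B)` by permuting the tensor factors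
and satisfies `g·e_σ = e_{gσ}`. -/
theorem snClosure_pi_regular_module {B : Type*} [CommRing B] {n : ℕ} :
    (∃ φ : MonoidAlgebra B (Equiv.Perm (Fin n)) ≃ₗ[B] SnClosure (Pi.basisFun B (Fin n)),
      ∀ σ : Equiv.Perm (Fin n), φ (MonoidAlgebra.single σ (1 : B)) = eIdem B σ) ∧
    (∀ g σ : Equiv.Perm (Fin n),
      (Ideal.Quotient.mk (snIdeal (Pi.basisFun B (Fin n))))
        ((PiTensorProduct.reindex B (fun _ : Fin n => (Fin n → B)) (g : Fin n ≃ Fin n))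
          (tprod B (fun j => Pi.single (σ⁻¹ j) (1 : B)))) = eIdem B (g * σ)) := by
  refine ⟨⟨(MonoidAlgebra.basis _ B).equiv (eIdemBasis B n) (Equiv.refl _), fun σ => ?_⟩,
    fun g σ => ?_⟩
  · rw [← MonoidAlgebra.basis_apply, Module.Basis.equiv_apply, eIdemBasis, Module.Basis.mk_apply]
    rfl
  · rw [PiTensorProduct.reindex_tprod, eIdem]
    rfl
end

section
/- The polynomial ring Z[X_1, ..., X_n] is a free module of rank n! over its subring Z[Σ_1, ..., Σ_n] generated by the elementary symmetric polynomials, with basis the monomials X_1^{e_1} ⋯ X_n^{e_n} where 0 ≤ e_i < i. -/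
/-
Let `S` contain the elementary symmetric polynomials and write `S[X_k, …]` for the algebra
generated by `S` and the variables `X_i` with `i ≥ k` (variables are indexed from `0`).
Dividing `∏_i (T - X_i)`, whose coefficients are `± Σ_j`, by the monic `∏_{i > k} (T - X_i)`
shows that `∏_{i ≤ k} (T - X_i)` has coefficients in `S[X_{k+1}, …]`. It is monic of degree
`k + 1` and vanishes at `X_k`, so `S[X_k, …]` is spanned over `S[X_{k+1}, …]` by
`1, X_k, …, X_k^k`; descending in `k`, the monomials `∏ X_i^{e_i}` with `e_i ≤ i` span the
polynomial ring `P` over `S`.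

There are `n!` of these monomials, and `n!` is also the degree of `Frac P` over the subfield
fixed by the symmetric group (Artin). The monomials span `Frac P` over that field, hence form a
basis of it, hence are linearly independent over any ring of symmetric polynomials.
-/

open scoped Polynomial

theorem Subalgebra.coeff_modByMonic_mem {R A : Type*} [CommRing R] [Ring A] [Algebra R A]
    (T : Subalgebra R A) {p q : A[X]} (hp : ∀ i, p.coeff i ∈ T) (hq : ∀ i, q.coeff i ∈ T)
    (i : ℕ) : (p %ₘ q).coeff i ∈ T := by
  have := Polynomial.coeff_modByMonic_mem_pow_natDegree_mul p q (toSubmodule T) hp (one_mem T)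
    (toSubmodule T) hq (one_mem T) i
  rwa [← pow_succ, T.isIdempotentElem_toSubmodule.pow_succ_eq] at this

theorem Subalgebra.coeff_divByMonic_mem {R A : Type*} [CommRing R] [Ring A] [Algebra R A]
    (T : Subalgebra R A) {p q : A[X]} (hp : ∀ i, p.coeff i ∈ T) (hq : ∀ i, q.coeff i ∈ T)
    (i : ℕ) : (p /ₘ q).coeff i ∈ T := by
  have := Polynomial.coeff_divByMonic_mem_pow_natDegree_mul p q (toSubmodule T) hp (one_mem T)
    (toSubmodule T) hq (one_mem T) i
  rwa [← pow_succ, T.isIdempotentElem_toSubmodule.pow_succ_eq] at this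

theorem Algebra.toSubmodule_adjoin_insert_le {R T : Type*} [CommRing R] [CommRing T] [Algebra R T]
    {s : Set T} {x : T} {g : T[X]} {d : ℕ} (hg : g.Monic) (hgd : g.natDegree ≤ d)
    (hg_coeff : ∀ i, g.coeff i ∈ Algebra.adjoin R s) (hx : g.eval x = 0) :
    Subalgebra.toSubmodule (Algebra.adjoin R (insert x s)) ≤
      Subalgebra.toSubmodule (Algebra.adjoin R s) *
        Submodule.span R (Set.range fun i : Fin d => x ^ (i : ℕ)) := by
  intro y hy
  rw [Set.insert_eq, Set.union_comm, Algebra.adjoin_union_eq_adjoin_adjoin,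
    Subalgebra.mem_toSubmodule, Subalgebra.mem_restrictScalars,
    Algebra.adjoin_singleton_eq_range_aeval] at hy
  obtain ⟨f, rfl⟩ := hy
  by_cases hg1 : g = 1
  · subst hg1
    have : Subsingleton T := subsingleton_of_zero_eq_one (by simpa using hx.symm)
    exact Subsingleton.elim 0 (Polynomial.aeval x f) ▸ Submodule.zero_mem _
  set f' := f.map (algebraMap (Algebra.adjoin R s) T)
  have hf' (i : ℕ) : f'.coeff i ∈ Algebra.adjoin R s := by
    rw [Polynomial.coeff_map]; exact SetLike.coe_mem _
  have hdeg := (Polynomial.natDegree_modByMonic_lt f' hg hg1).trans_le hgd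
  rw [AlgHom.toRingHom_eq_coe, RingHom.coe_coe, ← Polynomial.eval_map_algebraMap,
    ← Polynomial.coe_aeval_eq_eval, ← Polynomial.aeval_modByMonic_eq_self_of_root hx,
    Polynomial.aeval_eq_sum_range' hdeg]
  refine Submodule.sum_mem _ fun i hi => Submodule.mul_mem_mul ?_ ?_
  · exact Subalgebra.coeff_modByMonic_mem _ hf' hg_coeff i
  · exact Submodule.subset_span ⟨⟨i, Finset.mem_range.1 hi⟩, rfl⟩

section FixedField

variable {G A B L : Type*} [Group G] [CommRing A] [CommRing B] [Algebra A B]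
  [MulSemiringAction G B] [Field L] [Algebra B L] [MulSemiringAction G L] [SMulDistribClass G B L]

theorem algebraMap_mem_fixedPoints_subfield
    (hA : ∀ (g : G) (a : A), g • algebraMap A B a = algebraMap A B a) (a : A) :
    algebraMap B L (algebraMap A B a) ∈ FixedPoints.subfield G L := fun g => by
  rw [← algebraMap.coe_smul', hA]

theorem top_le_span_fixedPoints_subfield [Finite G] [IsFractionRing B L]
    (hA : ∀ (g : G) (a : A), g • algebraMap A B a = algebraMap A B a)
    {ι : Type*} {v : ι → B} (hv : ⊤ ≤ Submodule.span A (Set.range v)) :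
    ⊤ ≤ Submodule.span (FixedPoints.subfield G L) (Set.range (algebraMap B L ∘ v)) := by
  set K := FixedPoints.subfield G L
  set φ := algebraMap B L
  have hspan_range :
      Submodule.span K (Set.range φ) ≤ Submodule.span K (Set.range (φ ∘ v)) := by
    rw [Submodule.span_le]
    rintro _ ⟨b, rfl⟩
    induction hv (Submodule.mem_top (x := b)) using Submodule.span_induction with
    | mem x hx =>
      obtain ⟨i, rfl⟩ := hx
      exact Submodule.subset_span ⟨i, rfl⟩
    | zero => simp
    | add x y _ _ hx hy => simpa using add_mem hx hy
    | smul a x _ hx =>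
      rw [Algebra.smul_def, map_mul]
      exact Submodule.smul_mem _ (⟨_, algebraMap_mem_fixedPoints_subfield hA a⟩ : K) hx
  have hadjoin : Subalgebra.toSubmodule (Algebra.adjoin K (Set.range φ)) =
      Submodule.span K (Set.range φ) :=
    Algebra.adjoin_eq_span_of_subset K fun _ hy => Submodule.subset_span <|
      Submonoid.closure_le (S := φ.rangeS.toSubmonoid).2 (fun _ hy => hy) hy
  -- `L` is algebraic over `K`, so the `K`-algebra generated by `B` is closed under inverses.
  intro x _
  obtain ⟨p, q, -, rfl⟩ := IsFractionRing.div_surjective B x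
  refine hspan_range (hadjoin ▸ show φ p / φ q ∈ Algebra.adjoin K (Set.range φ) from
    div_eq_mul_inv (φ p) (φ q) ▸ mul_mem (Algebra.subset_adjoin (Set.mem_range_self p)) ?_)
  exact Subalgebra.inv_mem_of_algebraic _
    (x := ⟨φ q, Algebra.subset_adjoin (Set.mem_range_self q)⟩)
    (Algebra.IsAlgebraic.isAlgebraic _)

end FixedField

theorem linearIndependent_of_top_le_span_of_card_eq_card {G A B ι : Type*} [Group G]
    [Fintype G] [CommRing A] [CommRing B] [IsDomain B] [Algebra A B] [FaithfulSMul A B]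
    [MulSemiringAction G B] [FaithfulSMul G B]
    (hA : ∀ (g : G) (a : A), g • algebraMap A B a = algebraMap A B a)
    [Fintype ι] {v : ι → B} (hv : ⊤ ≤ Submodule.span A (Set.range v))
    (hcard : Fintype.card ι = Fintype.card G) : LinearIndependent A v := by
  let L := FractionRing B
  let := IsFractionRing.mulSemiringAction G B L
  have := IsFractionRing.faithfulSMul G B L
  have hli := linearIndependent_of_top_le_span_of_card_eq_finrank
    (top_le_span_fixedPoints_subfield (L := L) hA hv) (by rw [hcard, FixedPoints.finrank_eq_card])
  rw [Fintype.linearIndependent_iff] at hli ⊢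
  intro c hc i
  have := hli (fun i => ⟨_, algebraMap_mem_fixedPoints_subfield hA (c i)⟩) ?_ i
  · apply FaithfulSMul.algebraMap_injective A B
    apply IsFractionRing.injective B L
    rw [map_zero, map_zero]
    exact congrArg Subtype.val this
  · have := congrArg (algebraMap B L) hc
    simp only [map_sum, map_zero, Algebra.smul_def, map_mul] at this
    exact this

theorem Fintype.card_pi_fin_succ (n : ℕ) :
    Fintype.card ((i : Fin n) → Fin (i + 1)) = n.factorial := by
  rw [Fintype.card_pi]
  simp only [Fintype.card_fin]
  rw [Fin.prod_univ_eq_prod_range (· + 1), Finset.prod_range_add_one_eq_factorial]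

namespace MvPolynomial

section PermAction

variable {σ R : Type*} [CommRing R]

noncomputable instance : MulSemiringAction (Equiv.Perm σ) (MvPolynomial σ R) where
  smul e p := rename e p
  one_smul := rename_id_apply
  mul_smul e f p := (rename_rename f e p).symm
  smul_zero e := map_zero (rename e)
  smul_add e := map_add (rename e)
  smul_one e := map_one (rename e)
  smul_mul e := map_mul (rename e)

theorem perm_smul_eq_rename (e : Equiv.Perm σ) (p : MvPolynomial σ R) :
    e • p = rename e p := rfl

instance [Nontrivial R] : FaithfulSMul (Equiv.Perm σ) (MvPolynomial σ R) where
  eq_of_smul_eq_smul {e f} h := Equiv.ext fun i => X_injective (R := R) <| by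
    simpa [perm_smul_eq_rename] using h (X i)

end PermAction

variable {R : Type*} [CommRing R] {n : ℕ}

theorem coeff_prod_X_sub_C_X_mem {S : Subalgebra R (MvPolynomial (Fin n) R)}
    (hS : ∀ k ≤ n, esymm (Fin n) R k ∈ S) (i : ℕ) :
    (∏ j : Fin n, (Polynomial.X - Polynomial.C (X j)) : (MvPolynomial (Fin n) R)[X]).coeff i ∈
      S := by
  by_cases hi : i ≤ n
  · have hprod : ∏ j : Fin n, (Polynomial.X - Polynomial.C (X j) : (MvPolynomial (Fin n) R)[X]) =
        ((Finset.univ.val.map X).map fun t => Polynomial.X - Polynomial.C t).prod := by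
      rw [Multiset.map_map]; rfl
    rw [hprod, Multiset.prod_X_sub_C_coeff _ (by simpa using hi), ← esymm_eq_multiset_esymm]
    simp only [Multiset.card_map, Finset.card_val, Finset.card_univ, Fintype.card_fin]
    exact mul_mem (pow_mem (neg_mem (one_mem S)) _) (hS _ (Nat.sub_le n i))
  · rw [Polynomial.coeff_eq_zero_of_natDegree_lt]
    · exact zero_mem S
    refine (Polynomial.natDegree_prod_le _ _).trans_lt ?_
    calc ∑ j : Fin n, (Polynomial.X - Polynomial.C (X j) : (MvPolynomial (Fin n) R)[X]).natDegree
        ≤ ∑ _j : Fin n, 1 := Finset.sum_le_sum fun j _ => Polynomial.natDegree_X_sub_C_le _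
      _ < i := by simpa using hi

variable (S : Subalgebra R (MvPolynomial (Fin n) R))

noncomputable def adjoinXFrom (k : ℕ) : Subalgebra R (MvPolynomial (Fin n) R) :=
  Algebra.adjoin R (S ∪ X '' {i | k ≤ (i : ℕ)})

theorem coeff_prod_Iic_X_sub_C_X_mem (hS : ∀ k ≤ n, esymm (Fin n) R k ∈ S) (j : Fin n)
    (i : ℕ) :
    (∏ k ∈ Finset.Iic j, (Polynomial.X - Polynomial.C (X k)) :
      (MvPolynomial (Fin n) R)[X]).coeff i ∈ adjoinXFrom S (j + 1) := by
  set G : (MvPolynomial (Fin n) R)[X] := ∏ k ∈ Finset.Ioi j, (Polynomial.X - Polynomial.C (X k))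
  have hG : G.Monic := Polynomial.monic_prod_of_monic _ _ fun k _ => Polynomial.monic_X_sub_C _
  have hsplit : ∏ k : Fin n, (Polynomial.X - Polynomial.C (X k) : (MvPolynomial (Fin n) R)[X]) =
      G * ∏ k ∈ Finset.Iic j, (Polynomial.X - Polynomial.C (X k)) := by
    have hIoi : Finset.univ.filter (j < ·) = Finset.Ioi j := by ext; simp
    have hIic : Finset.univ.filter (¬ j < ·) = Finset.Iic j := by ext; simp
    rw [← Finset.prod_filter_mul_prod_filter_not Finset.univ (j < ·), hIoi, hIic]
  have hX_mem (k : Fin n) (hk : j < k) : X k ∈ adjoinXFrom S (j + 1) :=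
    Algebra.subset_adjoin (Or.inr ⟨k, hk, rfl⟩)
  have hG_lifts :
      G ∈ Polynomial.lifts (algebraMap (adjoinXFrom S (j + 1)) (MvPolynomial (Fin n) R)) :=
    Subsemiring.prod_mem _ fun k hk => ⟨Polynomial.X - Polynomial.C
      (⟨X k, hX_mem k (Finset.mem_Ioi.1 hk)⟩ : adjoinXFrom S (j + 1)), by
        rw [Polynomial.coe_mapRingHom, Polynomial.map_sub, Polynomial.map_X, Polynomial.map_C]
        rfl⟩
  rw [← Polynomial.mul_divByMonic_cancel_left (∏ k ∈ Finset.Iic j, _) hG, ← hsplit]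
  refine Subalgebra.coeff_divByMonic_mem _ (fun i => ?_) (fun i => ?_) i
  · exact Algebra.subset_adjoin (Or.inl (coeff_prod_X_sub_C_X_mem hS i))
  · obtain ⟨c, hc⟩ := (Polynomial.lifts_iff_coeff_lifts G).1 hG_lifts i
    exact hc ▸ c.2

theorem toSubmodule_adjoinXFrom_le (hS : ∀ k ≤ n, esymm (Fin n) R k ∈ S) (j : Fin n) :
    Subalgebra.toSubmodule (adjoinXFrom S j) ≤ Subalgebra.toSubmodule (adjoinXFrom S (j + 1)) *
      Submodule.span R
        (Set.range fun i : Fin (j + 1) => (X j : MvPolynomial (Fin n) R) ^ (i : ℕ)) := by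
  have hset : (S : Set (MvPolynomial (Fin n) R)) ∪ X '' {i : Fin n | (j : ℕ) ≤ i} =
      insert (X j)
        ((S : Set (MvPolynomial (Fin n) R)) ∪ X '' {i : Fin n | (j : ℕ) + 1 ≤ i}) := by
    have : {i : Fin n | (j : ℕ) ≤ i} = insert j {i : Fin n | (j : ℕ) + 1 ≤ i} := by
      ext i; simp only [Set.mem_ofPred_eq, Set.mem_insert_iff, Fin.ext_iff]; omega
    rw [this, Set.image_insert_eq, Set.union_insert]
  rw [adjoinXFrom, hset]
  refine Algebra.toSubmodule_adjoin_insert_le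
    (Polynomial.monic_prod_of_monic _ _ fun k _ => Polynomial.monic_X_sub_C _) ?_
    (coeff_prod_Iic_X_sub_C_X_mem S hS j) ?_
  · refine (Polynomial.natDegree_prod_le _ _).trans ((Finset.sum_le_card_nsmul _ _ 1
      fun k _ => Polynomial.natDegree_X_sub_C_le _).trans ?_)
    simp
  · rw [Polynomial.eval_prod]
    exact Finset.prod_eq_zero (Finset.mem_Iic.2 le_rfl) (by simp)

theorem toSubmodule_adjoinXFrom_le_prod (hS : ∀ k ≤ n, esymm (Fin n) R k ∈ S) {k : ℕ}
    (hk : k ≤ n) :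
    Subalgebra.toSubmodule (adjoinXFrom S k) ≤ Subalgebra.toSubmodule S *
      ∏ j ∈ Finset.univ.filter (fun j : Fin n => k ≤ (j : ℕ)), Submodule.span R
        (Set.range fun i : Fin (j + 1) => (X j : MvPolynomial (Fin n) R) ^ (i : ℕ)) := by
  induction hk using Nat.decreasingInduction with
  | self =>
    have hX : X '' {i : Fin n | n ≤ (i : ℕ)} = (∅ : Set (MvPolynomial (Fin n) R)) := by
      simp [Set.eq_empty_iff_forall_notMem]
    have hfilter : Finset.univ.filter (fun j : Fin n => n ≤ (j : ℕ)) = ∅ := by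
      ext j; simp [j.2]
    simp [adjoinXFrom, hX, hfilter, Algebra.adjoin_eq]
  | of_succ k hk ih =>
    have hfilter : Finset.univ.filter (fun j : Fin n => k ≤ (j : ℕ)) =
        insert ⟨k, hk⟩ (Finset.univ.filter (fun j : Fin n => k + 1 ≤ (j : ℕ))) := by
      ext j
      simp only [Finset.mem_filter, Finset.mem_univ, true_and, Finset.mem_insert, Fin.ext_iff]
      omega
    rw [hfilter, Finset.prod_insert (by simp), mul_left_comm]
    exact (toSubmodule_adjoinXFrom_le S hS ⟨k, hk⟩).trans (by rw [mul_comm]; gcongr)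

theorem top_le_span_range_prod_X_pow (hS : ∀ k ≤ n, esymm (Fin n) R k ∈ S) :
    ⊤ ≤ Submodule.span S (Set.range fun e : (i : Fin n) → Fin (i + 1) =>
      ∏ i, (X i : MvPolynomial (Fin n) R) ^ (e i : ℕ)) := by
  have htop : adjoinXFrom S 0 = ⊤ :=
    eq_top_iff.2 <| adjoin_range_X (R := R) ▸ Algebra.adjoin_mono (by simp [Set.image_univ])
  have := toSubmodule_adjoinXFrom_le_prod S hS (Nat.zero_le n)
  simp only [htop, Algebra.top_toSubmodule, zero_le, Finset.filter_true,
    Submodule.prod_span] at this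
  refine fun p _ => (Submodule.mul_le (P := (Submodule.span S _).restrictScalars R).2
    fun s hs q hq => ?_) (this Submodule.mem_top)
  refine Submodule.smul_mem _ (⟨s, hs⟩ : S) (Submodule.span_le_restrictScalars R S _ ?_)
  refine Submodule.span_mono ?_ hq
  intro q hq
  obtain ⟨g, hg, rfl⟩ := (Set.mem_finsetProd _ _ _).1 hq
  choose e he using fun i => hg (Finset.mem_univ i)
  exact ⟨e, Finset.prod_congr rfl fun i _ => he i⟩

theorem linearIndependent_prod_X_pow [IsDomain R] (hS : ∀ k ≤ n, esymm (Fin n) R k ∈ S)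
    (hS_symm : S ≤ symmetricSubalgebra (Fin n) R) :
    LinearIndependent S fun e : (i : Fin n) → Fin (i + 1) =>
      ∏ i, (X i : MvPolynomial (Fin n) R) ^ (e i : ℕ) :=
  linearIndependent_of_top_le_span_of_card_eq_card (G := Equiv.Perm (Fin n)) (A := S)
    (fun g a => (hS_symm a.2 : IsSymmetric (a : MvPolynomial (Fin n) R)) g)
    (top_le_span_range_prod_X_pow S hS)
    (by rw [Fintype.card_pi_fin_succ, Fintype.card_perm, Fintype.card_fin])

end MvPolynomial

/-- `ℤ[X₁,…,Xₙ]` is free of rank `n!` over the subring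
`ℤ[Σ₁,…,Σₙ]` generated by the elementary symmetric polynomials, with basis the
monomials `X₁^{e₁} ⋯ Xₙ^{eₙ}` with `0 ≤ eᵢ < i`. -/
theorem mvPolynomial_free_over_symmetric {n : ℕ} :
    ∃ bas : Module.Basis ((i : Fin n) → Fin ((i : ℕ) + 1))
        (Algebra.adjoin ℤ {p : MvPolynomial (Fin n) ℤ |
          ∃ k ∈ Finset.Icc 1 n, p = MvPolynomial.esymm (Fin n) ℤ k})
        (MvPolynomial (Fin n) ℤ),
      ∀ e, bas e = ∏ i : Fin n, (MvPolynomial.X i) ^ ((e i : ℕ)) := by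
  set S := Algebra.adjoin ℤ {p : MvPolynomial (Fin n) ℤ |
    ∃ k ∈ Finset.Icc 1 n, p = MvPolynomial.esymm (Fin n) ℤ k}
  have hS (k : ℕ) (hk : k ≤ n) : MvPolynomial.esymm (Fin n) ℤ k ∈ S := by
    rcases Nat.eq_zero_or_pos k with rfl | hk0
    · exact MvPolynomial.esymm_zero (Fin n) ℤ ▸ one_mem S
    · exact Algebra.subset_adjoin ⟨k, Finset.mem_Icc.2 ⟨hk0, hk⟩, rfl⟩
  have hS_symm : S ≤ MvPolynomial.symmetricSubalgebra (Fin n) ℤ :=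
    Algebra.adjoin_le fun _ ⟨k, _, hp⟩ => hp ▸ MvPolynomial.esymm_isSymmetric (Fin n) ℤ k
  exact ⟨Module.Basis.mk (MvPolynomial.linearIndependent_prod_X_pow S hS hS_symm)
    (MvPolynomial.top_le_span_range_prod_X_pow S hS), Module.Basis.mk_apply _ _⟩
end

section
/- Let K be a field of characteristic 0 or p > n and R_n = K[x_1,...,x_{n-1}]/(x_1,...,x_{n-1})². If i_1, ..., i_n ∈ {0,1,...,n-1} (with x_0 := 1) and there exists k ≥ 1 with |{j : i_j = 0}| < |{j : i_j = k}|, then the pure tensor x_{i_1} ⊗ x_{i_2} ⊗ ⋯ ⊗ x_{i_n} lies in the ideal I(R_n, K) of R_n^{⊗n}. -/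
/-!
Write `y_q = x_k^{(q)}` in `G = R_n^{⊗n} / I(R_n, K)`. Since `x_k` is nilpotent, `s_1(x_k) = 0`,
so `∑_q y_q = 0`; moreover `y_q² = 0`. Let `T` and `S` be the positions with `i_q = k` and
`i_q = 0`, and `w` the product of the factors of the pure tensor off `T`. As `x_m x_k = 0` for
`m ≠ 0`, `w` kills `y_q` for `q ∉ S ∪ T`, so `w (∑_T y + ∑_S y) = 0` and therefore
`w (∑_T y)^{#T} = w (-∑_S y)^{#T}`. For square-zero elements the left side is `#T! ·` (the
tensor), while the right side vanishes because `∑_S y` has fewer than `#T` summands.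
Finally `#T!` is invertible since `#T ≤ n` and the characteristic is `0` or `> n`.
-/

open scoped TensorProduct
open PiTensorProduct

/-- The maximally degenerate rank-`n` algebra `Rₙ = K[x₁,…,x_{n-1}]/(x₁,…,x_{n-1})²`. -/
noncomputable abbrev degRing (K : Type*) [Field K] (n : ℕ) : Type _ :=
  MvPolynomial (Fin (n - 1)) K ⧸
    (Ideal.span (Set.range (MvPolynomial.X : Fin (n - 1) → MvPolynomial (Fin (n - 1)) K))) ^ 2

/-- The generators `x₀ := 1` and `x_k :=` (image of the variable `X_{k-1}`) of `Rₙ`. -/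
noncomputable def xGen (K : Type*) [Field K] (n : ℕ) (k : Fin n) : degRing K n :=
  if h : (k : ℕ) = 0 then 1
  else Ideal.Quotient.mk _ (MvPolynomial.X (⟨(k : ℕ) - 1, by omega⟩ : Fin (n - 1)))

set_option synthInstance.maxHeartbeats 1000000

open Finset
open scoped Nat

section SquareZero

variable {ι R : Type*} [CommRing R]

theorem add_pow_succ_of_sq_eq_zero (x : R) {y : R} (hy : y ^ 2 = 0) (m : ℕ) :
    (x + y) ^ (m + 1) = x ^ (m + 1) + (m + 1) * x ^ m * y := by
  induction m with
  | zero => simp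
  | succ m ih =>
    rw [pow_succ, ih]
    push_cast
    linear_combination (↑m + 1) * x ^ m * hy

variable [DecidableEq ι] {y : ι → R}

theorem sum_pow_eq_zero_of_card_lt {s : Finset ι} (hy : ∀ q ∈ s, y q ^ 2 = 0) {m : ℕ}
    (hm : s.card < m) : (∑ q ∈ s, y q) ^ m = 0 := by
  induction s using Finset.induction_on generalizing m with
  | empty => simp [Nat.pos_iff_ne_zero.mp hm]
  | insert q s hq ih =>
    obtain ⟨m, rfl⟩ := Nat.exists_eq_add_one.mpr (Nat.zero_lt_of_lt hm)
    rw [card_insert_of_notMem hq] at hm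
    have hs : ∀ r ∈ s, y r ^ 2 = 0 := fun r hr => hy r (mem_insert_of_mem hr)
    rw [sum_insert hq, add_comm, add_pow_succ_of_sq_eq_zero _ (hy q (mem_insert_self q s)),
      ih hs (by omega), ih hs (by omega)]
    ring

theorem sum_pow_card_eq_factorial_mul_prod {s : Finset ι} (hy : ∀ q ∈ s, y q ^ 2 = 0) :
    (∑ q ∈ s, y q) ^ s.card = s.card ! * ∏ q ∈ s, y q := by
  induction s using Finset.induction_on with
  | empty => simp
  | insert q s hq ih =>
    have hs : ∀ r ∈ s, y r ^ 2 = 0 := fun r hr => hy r (mem_insert_of_mem hr)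
    rw [sum_insert hq, prod_insert hq, card_insert_of_notMem hq, add_comm,
      add_pow_succ_of_sq_eq_zero _ (hy q (mem_insert_self q s)), ih hs,
      sum_pow_eq_zero_of_card_lt hs (Nat.lt_succ_self _), Nat.factorial_succ]
    push_cast
    ring

theorem factorial_mul_mul_prod_eq_zero [Fintype ι] (hsum : ∑ q, y q = 0) {S T : Finset ι}
    (hS : ∀ q ∈ S, y q ^ 2 = 0) (hT : ∀ q ∈ T, y q ^ 2 = 0) (hST : Disjoint S T)
    (hcard : S.card < T.card) {w : R} (hw : ∀ q ∉ S ∪ T, w * y q = 0) :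
    (T.card ! : R) * (w * ∏ q ∈ T, y q) = 0 := by
  have hwST : w * (∑ q ∈ S, y q + ∑ q ∈ T, y q) = 0 := by
    rw [← sum_union hST, mul_sum, sum_subset (subset_univ _) fun q _ hq => hw q hq, ← mul_sum,
      hsum, mul_zero]
  obtain ⟨c, hc⟩ := sub_dvd_pow_sub_pow (∑ q ∈ T, y q) (-∑ q ∈ S, y q) T.card
  calc (T.card ! : R) * (w * ∏ q ∈ T, y q) = w * (∑ q ∈ T, y q) ^ T.card := by
        rw [sum_pow_card_eq_factorial_mul_prod hT]; ring
    _ = w * (-∑ q ∈ S, y q) ^ T.card := by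
        rw [← sub_eq_zero, ← mul_sub, hc, sub_neg_eq_add, add_comm, ← mul_assoc, hwST, zero_mul]
    _ = 0 := by rw [neg_pow, sum_pow_eq_zero_of_card_lt hS hcard, mul_zero, mul_zero]

end SquareZero

theorem isUnit_natCast_factorial (K : Type*) {B : Type*} [Field K] [Semiring B] [Algebra K B]
    {p : ℕ} [CharP K p] {d : ℕ} (hd : p = 0 ∨ d < p) : IsUnit (d ! : B) := by
  suffices IsUnit (d ! : K) by simpa using this.map (algebraMap K B)
  rcases hd with rfl | hdp
  · have := CharP.charP_to_charZero K
    exact IsUnit.natCast_factorial_of_algebra K d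
  · have : Fact p.Prime := ⟨(CharP.char_is_prime_or_zero K p).resolve_right (by omega)⟩
    exact (IsUnit.natCast_factorial_iff_of_charP p).mpr hdp

theorem sCoeff_one_eq_zero_of_isNilpotent {K A : Type*} [CommRing K] [IsReduced K] [CommRing A]
    [Algebra K A] {n : ℕ} (hn : 0 < n) (b : Module.Basis (Fin n) K A) {a : A}
    (ha : IsNilpotent a) : sCoeff b a 1 = 0 := by
  have : Nonempty (Fin n) := ⟨⟨0, hn⟩⟩
  have htr : (Algebra.leftMulMatrix b a).trace = 0 :=
    (Matrix.isNilpotent_trace_of_isNilpotent (ha.map (Algebra.leftMulMatrix b))).eq_zero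
  rw [Matrix.trace_eq_neg_charpoly_coeff, Fintype.card_fin, neg_eq_zero] at htr
  rw [sCoeff, htr, mul_zero]

section SnClosure

variable {K A : Type*} [CommRing K] [CommRing A] [Algebra K A] {n : ℕ}
  (b : Module.Basis (Fin n) K A)

theorem tf_eq_mk_singleAlgHom (a : A) (q : Fin n) :
    tf b a q = Ideal.Quotient.mk (snIdeal b) (singleAlgHom q a) := by
  rw [tf, singleAlgHom_apply, MonoidHom.mulSingle_apply]
  congr 2
  funext p
  exact (Pi.mulSingle_apply q a p).symm

theorem tf_mul (a a' : A) (q : Fin n) : tf b a q * tf b a' q = tf b (a * a') q := by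
  simp only [tf_eq_mk_singleAlgHom, map_mul]

theorem tf_zero (q : Fin n) : tf b 0 q = 0 := by
  simp only [tf_eq_mk_singleAlgHom, map_zero]

theorem mk_tprod_eq_prod_tf (f : Fin n → A) :
    Ideal.Quotient.mk (snIdeal b) (tprod K f) = ∏ q, tf b (f q) q := by
  conv_lhs => rw [← Finset.univ_prod_mulSingle f, tprod_prod, map_prod]
  simp only [tf_eq_mk_singleAlgHom, singleAlgHom_apply, MonoidHom.mulSingle_apply]

theorem sum_tf_eq_zero {a : A} (ha : sCoeff b a 1 = 0) : ∑ q, tf b a q = 0 := by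
  rcases Nat.eq_zero_or_pos n with rfl | hn
  · simp
  have hgen : _ ∈ snIdeal b := Ideal.subset_span ⟨a, ⟨0, hn⟩, rfl⟩
  simp only [zero_add, ha, map_zero, zero_sub, neg_mem_iff, powersetCard_one, sum_map] at hgen
  simpa [tf, ← map_sum, Ideal.Quotient.eq_zero_iff_mem] using hgen

end SnClosure

theorem xGen_mul_xGen_eq_zero {K : Type*} [Field K] {n : ℕ} {k m : Fin n}
    (hk : (k : ℕ) ≠ 0) (hm : (m : ℕ) ≠ 0) : xGen K n k * xGen K n m = 0 := by
  rw [xGen, xGen, dif_neg hk, dif_neg hm, ← map_mul, Ideal.Quotient.eq_zero_iff_mem, pow_two]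
  exact Ideal.mul_mem_mul (Ideal.subset_span ⟨_, rfl⟩) (Ideal.subset_span ⟨_, rfl⟩)

/-- Over a field of characteristic `0` or `p > n`: if
`i₁,…,iₙ ∈ {0,…,n-1}` and for some `k ≥ 1` fewer of the `i_j` equal `0` than equal `k`,
then `x_{i₁} ⊗ ⋯ ⊗ x_{iₙ} ∈ I(Rₙ, K)`. -/
theorem degenerate_pure_tensor_mem_ideal {K : Type*} [Field K] {n p : ℕ} [CharP K p]
    (hp : p = 0 ∨ n < p) (b : Module.Basis (Fin n) K (degRing K n)) (i : Fin n → Fin n)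
    (hk : ∃ k : Fin n, (k : ℕ) ≠ 0 ∧
      (Finset.univ.filter (fun j => (i j : ℕ) = 0)).card <
        (Finset.univ.filter (fun j => i j = k)).card) :
    PiTensorProduct.tprod K (fun j => xGen K n (i j)) ∈ snIdeal b := by
  obtain ⟨k, hk0, hcard⟩ := hk
  set S := univ.filter (fun j => (i j : ℕ) = 0)
  set T := univ.filter (fun j => i j = k)
  set x := fun q => tf b (xGen K n (i q)) q
  set y := fun q => tf b (xGen K n k) q
  have hxk : xGen K n k * xGen K n k = 0 := xGen_mul_xGen_eq_zero hk0 hk0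
  have hy : ∀ q, y q ^ 2 = 0 := fun q => by simp only [y, pow_two, tf_mul, hxk, tf_zero]
  have hsum : ∑ q, y q = 0 :=
    sum_tf_eq_zero b (sCoeff_one_eq_zero_of_isNilpotent k.pos b ⟨2, pow_two (xGen K n k) ▸ hxk⟩)
  have hw : ∀ q ∉ S ∪ T, (∏ r ∈ Tᶜ, x r) * y q = 0 := fun q hq => by
    simp only [S, T, mem_union, mem_filter, mem_univ, true_and, not_or] at hq
    rw [← mul_prod_erase _ _ (by simpa [T] using hq.2), mul_right_comm, tf_mul,
      xGen_mul_xGen_eq_zero hq.1 hk0, tf_zero, zero_mul]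
  have htarget : Ideal.Quotient.mk (snIdeal b) (tprod K fun j => xGen K n (i j)) =
      (∏ r ∈ Tᶜ, x r) * ∏ q ∈ T, y q := by
    rw [mk_tprod_eq_prod_tf, ← prod_mul_prod_compl T, mul_comm]
    congr 1
    exact prod_congr rfl fun q hq => by simp only [y, (mem_filter.mp hq).2]
  have hunit : IsUnit (T.card ! : SnClosure b) := isUnit_natCast_factorial K
    (hp.imp_right ((card_le_univ T).trans_eq (Fintype.card_fin n)).trans_lt)
  refine Ideal.Quotient.eq_zero_iff_mem.mp ?_
  rw [htarget, ← hunit.mul_right_eq_zero]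
  exact factorial_mul_mul_prod_eq_zero hsum (fun q _ => hy q) (fun q _ => hy q)
    (disjoint_filter.mpr fun q _ (h0 : (i q : ℕ) = 0) (hqk : i q = k) => hk0 (hqk ▸ h0)) hcard hw
end

section
/- Let ε and τ be partitions of n with τ_{k-1} > τ_k = 0, and suppose ε is obtained from τ by removing one box from row i (with i > 1) and adding a new row of length 1, i.e. ε = (τ_1,...,τ_{i-1}, τ_i - 1, τ_{i+1},...,τ_{k-1}, 1). Then the product of hook lengths of the boxes in the first row of the Young diagram of τ is at least the corresponding product for ε. -/
/-- `p : ℕ → ℕ` is a partition of `n` (rows indexed from `0`, weakly decreasing,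
summing to `n`, vanishing from row `n` on). -/
def IsPartitionFun (n : ℕ) (p : ℕ → ℕ) : Prop :=
  Antitone p ∧ (∑ i ∈ Finset.range n, p i) = n ∧ ∀ i, n ≤ i → p i = 0

/-- The hook length of the box in row `i`, column `j` (both `0`-indexed) of the Young
diagram of the partition `p` of `n`: `(p i - j) + #{k > i : p k > j}`. -/
def hookLen (n : ℕ) (p : ℕ → ℕ) (i j : ℕ) : ℕ :=
  (p i - j) + ((Finset.Ioo i n).filter (fun k => j < p k)).card

/-- The product of all hook lengths of the Young diagram of the partition `p` of `n`. -/
def hookProd (n : ℕ) (p : ℕ → ℕ) : ℕ :=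
  ∏ i ∈ Finset.range n, ∏ j ∈ Finset.range (p i), hookLen n p i j

/-!
Passing from `τ` to `ε` leaves the first row and every column except two unchanged: column `0`
gains the new box in row `k`, and column `τ i - 1` loses the box of row `i`. Hence exactly two
first-row hooks change, `a = h(0,0)` becomes `a + 1` and `b = h(0, τ i - 1)` becomes `b - 1`.
Since hooks decrease along a row, `b ≤ a`, and `(a + 1)(b - 1) ≤ a b`.
-/

open Finset

theorem Finset.card_filter_eq_card_filter_add_one {α : Type*} [DecidableEq α] {s : Finset α}
    {p q : α → Prop} [DecidablePred p] [DecidablePred q] {a : α} (ha : a ∈ s) (hpa : p a)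
    (hqa : ¬ q a) (h : ∀ x ∈ s, x ≠ a → (p x ↔ q x)) :
    #(s.filter p) = #(s.filter q) + 1 := by
  have hinsert : s.filter p = insert a (s.filter q) := by
    ext x
    by_cases hx : x = a
    · subst hx; simp [ha, hpa]
    · simp only [mem_filter, mem_insert, hx, false_or]
      exact and_congr_right fun hxs => h x hxs hx
  rw [hinsert, card_insert_of_notMem (by simp [hqa])]

theorem Finset.prod_le_prod_of_shift_one {ι : Type*} {s : Finset ι} {f g : ι → ℕ} {a b : ι}
    (ha : a ∈ s) (hb : b ∈ s) (hab : a ≠ b) (hfa : f a = g a + 1) (hfb : f b + 1 = g b)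
    (hba : f b ≤ g a) (hf : ∀ x ∈ s, x ≠ a → x ≠ b → f x = g x) :
    ∏ x ∈ s, f x ≤ ∏ x ∈ s, g x := by
  classical
  have hb' : b ∈ s.erase a := mem_erase.mpr ⟨hab.symm, hb⟩
  have hrest : ∏ x ∈ (s.erase a).erase b, f x = ∏ x ∈ (s.erase a).erase b, g x :=
    prod_congr rfl fun x hx => by
      obtain ⟨hxb, hxa, hxs⟩ : x ≠ b ∧ x ≠ a ∧ x ∈ s := by simpa using hx
      exact hf x hxs hxa hxb
  rw [← mul_prod_erase s f ha, ← mul_prod_erase s g ha, ← mul_prod_erase _ f hb',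
    ← mul_prod_erase _ g hb', hrest, hfa, ← hfb, ← mul_assoc, ← mul_assoc]
  gcongr ?_ * _
  nlinarith

theorem hookLen_antitone (n : ℕ) (p : ℕ → ℕ) (i : ℕ) : Antitone (hookLen n p i) := by
  intro j j' hj
  unfold hookLen
  gcongr

def moveBoxToNewRow (τ : ℕ → ℕ) (i k : ℕ) (r : ℕ) : ℕ :=
  if r = i then τ i - 1 else if r = k then 1 else τ r

section moveBoxToNewRow

variable {n i k : ℕ} {τ : ℕ → ℕ}

theorem moveBoxToNewRow_zero (hi : 0 < i) (hik : i < k) : moveBoxToNewRow τ i k 0 = τ 0 := by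
  simp [moveBoxToNewRow, hi.ne, (hi.trans hik).ne]

theorem hookLen_moveBoxToNewRow_zero_zero (hi : 0 < i) (hik : i < k) (hkn : k < n)
    (hkzero : τ k = 0) (hτi : 2 ≤ τ i) :
    hookLen n (moveBoxToNewRow τ i k) 0 0 = hookLen n τ 0 0 + 1 := by
  rw [hookLen, hookLen, moveBoxToNewRow_zero hi hik, add_assoc]
  congr 1
  refine card_filter_eq_card_filter_add_one (a := k) (mem_Ioo.mpr ⟨hi.trans hik, hkn⟩)
    (by simp [moveBoxToNewRow, hik.ne']) (by simp [hkzero]) fun m _ hmk => ?_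
  by_cases hmi : m = i
  · subst hmi; simp only [moveBoxToNewRow, if_true]; omega
  · simp [moveBoxToNewRow, hmi, hmk]

theorem hookLen_moveBoxToNewRow_add_one (hi : 0 < i) (hik : i < k) (hkn : k < n)
    (hkzero : τ k = 0) (hτi : 2 ≤ τ i) :
    hookLen n (moveBoxToNewRow τ i k) 0 (τ i - 1) + 1 = hookLen n τ 0 (τ i - 1) := by
  rw [hookLen, hookLen, moveBoxToNewRow_zero hi hik, add_assoc]
  congr 1
  refine (card_filter_eq_card_filter_add_one (a := i) (mem_Ioo.mpr ⟨hi, hik.trans hkn⟩)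
    (by omega) (by simp [moveBoxToNewRow]) fun m _ hmi => ?_).symm
  by_cases hmk : m = k
  · subst hmk; simp [moveBoxToNewRow, hik.ne', hkzero]; omega
  · simp [moveBoxToNewRow, hmi, hmk]

theorem hookLen_moveBoxToNewRow_of_ne (hi : 0 < i) (hik : i < k) (hkzero : τ k = 0) {j : ℕ}
    (hj : j ≠ 0) (hji : j ≠ τ i - 1) :
    hookLen n (moveBoxToNewRow τ i k) 0 j = hookLen n τ 0 j := by
  rw [hookLen, hookLen, moveBoxToNewRow_zero hi hik]
  congr 2
  refine filter_congr fun m _ => ?_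
  unfold moveBoxToNewRow
  split_ifs with hmi hmk
  · subst hmi; omega
  · subst hmk; omega
  · rfl

end moveBoxToNewRow

theorem firstRow_hookProd_ge_general {n k i : ℕ} (τ ε : ℕ → ℕ)
    (hτ : IsPartitionFun n τ) (hε : IsPartitionFun n ε)
    (hkzero : τ k = 0)
    (hi : 1 ≤ i) (hik : i < k)
    (hεdef : ∀ r, ε r = if r = i then τ i - 1 else if r = k then 1 else τ r) :
    (∏ j ∈ Finset.range (ε 0), hookLen n ε 0 j) ≤
      ∏ j ∈ Finset.range (τ 0), hookLen n τ 0 j := by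
  obtain rfl : ε = moveBoxToNewRow τ i k := funext hεdef
  have hεk : moveBoxToNewRow τ i k k = 1 := by simp [moveBoxToNewRow, hik.ne']
  have hkn : k < n := by
    by_contra! hnk
    simpa [hεk] using hε.2.2 k hnk
  have hτi : 2 ≤ τ i := by
    have := hε.1 hik.le
    rw [hεk] at this
    simp only [moveBoxToNewRow, if_true] at this
    omega
  have hτi0 : τ i ≤ τ 0 := hτ.1 (Nat.zero_le i)
  have hshift := hookLen_moveBoxToNewRow_add_one (n := n) hi hik hkn hkzero hτi
  have hbound : hookLen n (moveBoxToNewRow τ i k) 0 (τ i - 1) ≤ hookLen n τ 0 0 := by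
    have := hookLen_antitone n τ 0 (Nat.zero_le (τ i - 1))
    omega
  rw [moveBoxToNewRow_zero hi hik]
  exact prod_le_prod_of_shift_one (a := 0) (b := τ i - 1) (mem_range.mpr (by omega))
    (mem_range.mpr (by omega)) (by omega)
    (hookLen_moveBoxToNewRow_zero_zero hi hik hkn hkzero hτi) hshift hbound
    fun j _ hj hji => hookLen_moveBoxToNewRow_of_ne hi hik hkzero hj hji

/-- Let `τ` be a partition of `n` with exactly `k` nonzero rows
(`τ_{k-1} > τ_k = 0`, rows `0`-indexed), and let `ε` be the partition obtained from `τ`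
by removing one box from row `i` (for some `0 < i < k`) and appending a new row of
length `1`. Then the product of the first-row hook lengths of `τ` is at least that
of `ε`. -/
theorem firstRow_hookProd_ge {n k i : ℕ} (τ ε : ℕ → ℕ)
    (hτ : IsPartitionFun n τ) (hε : IsPartitionFun n ε)
    (hk : 1 ≤ k) (hklast : 0 < τ (k - 1)) (hkzero : τ k = 0)
    (hi : 1 ≤ i) (hik : i < k)
    (hεdef : ∀ r, ε r = if r = i then τ i - 1 else if r = k then 1 else τ r) :
    (∏ j ∈ Finset.range (ε 0), hookLen n ε 0 j) ≤
      ∏ j ∈ Finset.range (τ 0), hookLen n τ 0 j :=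
  firstRow_hookProd_ge_general τ ε hτ hε hkzero hi hik hεdef
end
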